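/- Consider the Interaction 7 guiding system F : ℝ² → ℝ², F(Σ,Ω) = ((3/2)·Σ·(−γ(Σ²+Ω²−1)+2Σ²+Ω²−2), (3/2)·Ω·(−γΣ² + γ − Ω²·(γ+m−1) − mΣ² + m + 2Σ² − 1)), with parameters γ ∈ [0,2] and m ∈ ℝ. Then (0,1) is an equilibrium point, the Jacobian matrix of F at (0,1) is the diagonal matrix with diagonal entries −3/2 and −3(γ+m−1), and both entries are negative if and only if γ + m > 1 (so (0,1) is a hyperbolic sink exactly for γ + m > 1). -/

import Mathlib

/-!
Both components of the field factor as `Σ · a(Σ, Ω)` and `b(Σ, Ω) · Ω`, with `a` and `b` of the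
form `c₀ + c₁ Σ² + c₂ Ω²`. At `(0, 1)` the factors `Σ` and `b` vanish, so the product rule leaves
only `a(0, 1) dΣ = -3/2 dΣ` and `∂b/∂Ω(0, 1) dΩ = -3(γ + m - 1) dΩ`: the Jacobian is diagonal.
-/

open ContinuousLinearMap

theorem HasFDerivAt.mul_of_left_eq_zero {E : Type*} [NormedAddCommGroup E] [NormedSpace ℝ E]
    {u v : E → ℝ} {u' v' : E →L[ℝ] ℝ} {x : E}
    (hu : HasFDerivAt u u' x) (hv : HasFDerivAt v v' x) (hux : u x = 0) :
    HasFDerivAt (fun y => u y * v y) (v x • u') x := by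
  simpa [hux] using hu.fun_mul hv

theorem hasFDerivAt_const_add_mul_sq_add_mul_sq (c₀ c₁ c₂ : ℝ) (p : ℝ × ℝ) :
    HasFDerivAt (fun q : ℝ × ℝ => c₀ + c₁ * q.1 ^ 2 + c₂ * q.2 ^ 2)
      ((2 * c₁ * p.1) • fst ℝ ℝ ℝ + (2 * c₂ * p.2) • snd ℝ ℝ ℝ) p := by
  have h := ((hasFDerivAt_const c₀ p).add
    (((hasFDerivAt_fst (𝕜 := ℝ) (p := p)).pow 2).const_mul c₁)).add
    (((hasFDerivAt_snd (𝕜 := ℝ) (p := p)).pow 2).const_mul c₂)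
  refine h.congr_fderiv (ext fun q => ?_)
  simp only [add_apply, smul_apply, zero_apply, coe_fst', coe_snd', smul_eq_mul]
  ring

theorem interaction7_scalar_field_point_stability_general
    (γ m : ℝ)
    (F : ℝ × ℝ → ℝ × ℝ)
    (hF : ∀ p : ℝ × ℝ, F p =
      ((3 / 2) * p.1 * (-γ * (p.1 ^ 2 + p.2 ^ 2 - 1) + 2 * p.1 ^ 2 + p.2 ^ 2 - 2),
       (3 / 2) * p.2 * (-γ * p.1 ^ 2 + γ - p.2 ^ 2 * (γ + m - 1)
         - m * p.1 ^ 2 + m + 2 * p.1 ^ 2 - 1))) :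
    F (0, 1) = (0, 0) ∧
    HasFDerivAt F
      (((-3 / 2 : ℝ) • ContinuousLinearMap.id ℝ ℝ).prodMap
        ((-3 * (γ + m - 1)) • ContinuousLinearMap.id ℝ ℝ)) (0, 1) ∧
    (((-3 / 2 : ℝ) < 0 ∧ -3 * (γ + m - 1) < 0) ↔ γ + m > 1) := by
  have hF_factor : F = fun q =>
      (q.1 * (3 / 2 * (γ - 2) + 3 / 2 * (2 - γ) * q.1 ^ 2 + 3 / 2 * (1 - γ) * q.2 ^ 2),
       (3 / 2 * (γ + m - 1) + 3 / 2 * (2 - γ - m) * q.1 ^ 2 + -(3 / 2) * (γ + m - 1) * q.2 ^ 2)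
         * q.2) :=
    funext fun q => by rw [hF]; exact Prod.ext (by ring) (by ring)
  have hSigma := hasFDerivAt_fst.mul_of_left_eq_zero
    (hasFDerivAt_const_add_mul_sq_add_mul_sq (3 / 2 * (γ - 2)) (3 / 2 * (2 - γ)) (3 / 2 * (1 - γ))
      ((0 : ℝ), (1 : ℝ))) rfl
  have hOmega := (hasFDerivAt_const_add_mul_sq_add_mul_sq (3 / 2 * (γ + m - 1))
    (3 / 2 * (2 - γ - m)) (-(3 / 2) * (γ + m - 1)) ((0 : ℝ), (1 : ℝ))).mul_of_left_eq_zero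
      hasFDerivAt_snd (by norm_num)
  refine ⟨by rw [hF]; norm_num; ring, ?_,
    ⟨fun ⟨_, h⟩ => by linarith, fun h => ⟨by norm_num, by linarith⟩⟩⟩
  rw [hF_factor]
  refine (hSigma.prodMk hOmega).congr_fderiv (ext fun q => ?_)
  simp only [coe_prodMap', Prod.map, prod_apply, smul_apply, add_apply, id_apply, coe_fst',
    coe_snd', smul_eq_mul, Prod.ext_iff]
  constructor <;> ring

/-- Interaction 7 guiding system: `(0,1)` is an equilibrium, its Jacobian is
`diag(−3/2, −3(γ+m−1))`, and both eigenvalues are negative iff `γ + m > 1`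
(hyperbolic sink exactly then). -/
theorem interaction7_scalar_field_point_stability
    (γ m : ℝ) (hγ0 : 0 ≤ γ) (hγ2 : γ ≤ 2)
    (F : ℝ × ℝ → ℝ × ℝ)
    (hF : ∀ p : ℝ × ℝ, F p =
      ((3 / 2) * p.1 * (-γ * (p.1 ^ 2 + p.2 ^ 2 - 1) + 2 * p.1 ^ 2 + p.2 ^ 2 - 2),
       (3 / 2) * p.2 * (-γ * p.1 ^ 2 + γ - p.2 ^ 2 * (γ + m - 1)
         - m * p.1 ^ 2 + m + 2 * p.1 ^ 2 - 1))) :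
    F (0, 1) = (0, 0) ∧
    HasFDerivAt F
      (((-3 / 2 : ℝ) • ContinuousLinearMap.id ℝ ℝ).prodMap
        ((-3 * (γ + m - 1)) • ContinuousLinearMap.id ℝ ℝ)) (0, 1) ∧
    (((-3 / 2 : ℝ) < 0 ∧ -3 * (γ + m - 1) < 0) ↔ γ + m > 1) :=
  interaction7_scalar_field_point_stability_general γ m F hF
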